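/- arXiv:math/0510591 — 2 statements merged into one kernel-verified Lean document; each statement's English description precedes it below -/
import Mathlib

section
/- Let (X, A, μ) be a finite measure space, p > 1, p' = p/(p−1), and let H_n : X × ℝ^N → ℝ be Carathéodory functions such that: (1) |H_n(x,ξ)| ≤ a|ξ|^{p−1} + b(x) for a constant a ≥ 0 and b ∈ L^{p'}(X); (2) for all M ≥ 0 and a.e. x, whenever |ξ¹_n| ≤ M, |ξ²_n| ≤ M and |ξ¹_n − ξ²_n| → 0, one has |H_n(x,ξ¹_n) − H_n(x,ξ²_n)| → 0. If (Φ_n) is bounded in L^p(X, ℝ^N) and Ψ_n → 0 strongly in L^p(X, ℝ^N), then ∫_X [H_n(x, Φ_n(x) + Ψ_n(x)) − H_n(x, Φ_n(x))]·Φ(x) dμ(x) → 0 for every Φ ∈ L^p(X, ℝ^N). -/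
open MeasureTheory Filter Topology
open scoped ENNReal NNReal

/-- Carathéodory functions compose measurably with measurable functions. -/
lemma cara_meas {X : Type*} [MeasurableSpace X] {H : X → ℝ → ℝ}
    (hm : ∀ ξ, Measurable fun x => H x ξ) (hc : ∀ x, Continuous (H x))
    {f : X → ℝ} (hf : Measurable f) : Measurable fun x => H x (f x) := by
  have happrox : ∀ x, Tendsto
      (fun k => SimpleFunc.approxOn f hf Set.univ 0 (Set.mem_univ 0) k x) atTop (𝓝 (f x)) :=
    fun x => SimpleFunc.tendsto_approxOn hf _ (by simp)
  refine measurable_of_tendsto_metrizable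
    (f := fun k x => H x (SimpleFunc.approxOn f hf Set.univ 0 (Set.mem_univ 0) k x))
    (fun k => ?_)
    (tendsto_pi_nhds.2 fun x => ((hc x).tendsto _).comp (happrox x))
  exact (SimpleFunc.approxOn f hf Set.univ 0 (Set.mem_univ 0) k).measurable_bind
    (fun ξ x => H x ξ) hm

/-- truncation of a real number to `[-c, c]` -/
noncomputable def clipR (c t : ℝ) : ℝ := max (-c) (min c t)

lemma clipR_abs_le {c : ℝ} (hc : 0 ≤ c) (t : ℝ) : |clipR c t| ≤ c := by
  rw [abs_le, clipR]
  constructor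
  · exact le_max_left _ _
  · exact max_le (by linarith) (min_le_left _ _)

lemma clipR_abs_le_abs {c : ℝ} (hc : 0 ≤ c) (t : ℝ) : |clipR c t| ≤ |t| := by
  rw [abs_le, clipR]
  constructor
  · exact le_max_of_le_right (le_min ((neg_nonpos.2 (abs_nonneg t)).trans hc) (neg_abs_le t))
  · exact max_le ((neg_nonpos.2 hc).trans (abs_nonneg t)) ((min_le_right _ _).trans (le_abs_self t))

lemma clipR_eq_self {c t : ℝ} (ht : |t| ≤ c) : clipR c t = t := by
  rw [abs_le] at ht
  rw [clipR, min_eq_right ht.2, max_eq_right ht.1]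

/-- Lemma (convergence of momenta): under a `p−1` growth bound and an equiuniform continuity
assumption on the Carathéodory functions `H_n`, if `(Φ_n)` is bounded in `L^p` and `Ψ_n → 0`
in `L^p`, then `∫ [H_n(x, Φ_n + Ψ_n) − H_n(x, Φ_n)] Φ dμ → 0` for every `Φ ∈ L^p`. -/
theorem stmt_9 {X : Type*} [MeasurableSpace X] (μ : Measure X) [IsFiniteMeasure μ]
    (p : ℝ) (hp : 1 < p) (a : ℝ) (ha : 0 ≤ a)
    (b : X → ℝ) (hb : MemLp b (ENNReal.ofReal (p / (p - 1))) μ) (hb0 : ∀ x, 0 ≤ b x)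
    (H : ℕ → X → ℝ → ℝ)
    (hHmeas : ∀ n ξ, Measurable fun x => H n x ξ)
    (hHcont : ∀ n, ∀ᵐ x ∂μ, Continuous (H n x))
    (hgrowth : ∀ n, ∀ᵐ x ∂μ, ∀ ξ : ℝ, |H n x ξ| ≤ a * |ξ| ^ (p - 1) + b x)
    (hequi : ∀ᵐ x ∂μ, ∀ M : ℝ, 0 ≤ M → ∀ ξ₁ ξ₂ : ℕ → ℝ,
      (∀ n, |ξ₁ n| ≤ M) → (∀ n, |ξ₂ n| ≤ M) →
      Tendsto (fun n => ξ₁ n - ξ₂ n) atTop (𝓝 0) →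
      Tendsto (fun n => H n x (ξ₁ n) - H n x (ξ₂ n)) atTop (𝓝 0))
    (Φseq Ψ : ℕ → X → ℝ)
    (hΦmem : ∀ n, MemLp (Φseq n) (ENNReal.ofReal p) μ)
    (hΦbd : ∃ C : ENNReal, C ≠ ⊤ ∧ ∀ n, eLpNorm (Φseq n) (ENNReal.ofReal p) μ ≤ C)
    (hΨmem : ∀ n, MemLp (Ψ n) (ENNReal.ofReal p) μ)
    (hΨ : Tendsto (fun n => eLpNorm (Ψ n) (ENNReal.ofReal p) μ) atTop (𝓝 0))
    (Φ : X → ℝ) (hΦ : MemLp Φ (ENNReal.ofReal p) μ) :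
    Tendsto (fun n => ∫ x, (H n x (Φseq n x + Ψ n x) - H n x (Φseq n x)) * Φ x ∂μ)
      atTop (𝓝 0) := by
  classical
  obtain ⟨C, hCtop, hC⟩ := hΦbd
  set q : ℝ := p / (p - 1) with hq
  have hpq : p.HolderConjugate q := Real.HolderConjugate.conjExponent hp
  have hp0 : (0:ℝ) < p := hpq.pos
  have hq1 : (1:ℝ) < q := hpq.symm.lt
  have hq0 : (0:ℝ) < q := lt_trans zero_lt_one hq1
  set P : ℝ≥0∞ := ENNReal.ofReal p with hPdef
  set Q : ℝ≥0∞ := ENNReal.ofReal q with hQdef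
  have hP1 : 1 ≤ P := ENNReal.one_le_ofReal.2 hp.le
  have hQ1 : 1 ≤ Q := ENNReal.one_le_ofReal.2 hq1.le
  have hP0 : P ≠ 0 := by simp [hPdef, hp0]
  have hPtop : P ≠ ∞ := ENNReal.ofReal_ne_top
  have hPreal : P.toReal = p := ENNReal.toReal_ofReal hp0.le
  have hQP : 1 / (1:ℝ≥0∞) = 1 / Q + 1 / P := by
    rw [one_div, one_div, one_div, hPdef, hQdef,
      ← ENNReal.ofReal_inv_of_pos hq0, ← ENNReal.ofReal_inv_of_pos hp0,
      ← ENNReal.ofReal_add (by positivity) (by positivity)]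
    have : q⁻¹ + p⁻¹ = 1 := by rw [add_comm]; exact hpq.inv_add_inv_eq_one
    rw [this, ENNReal.ofReal_one, inv_one]
  have hQmul : Q * ENNReal.ofReal (p - 1) = P := by
    rw [hQdef, hPdef, ← ENNReal.ofReal_mul hq0.le]
    congr 1
    rw [hq, div_mul_cancel₀ _ (by linarith : p - (1:ℝ) ≠ 0)]
  -- modified H which is everywhere continuous in ξ
  set T : ℕ → Set X := fun n => toMeasurable μ {x | ¬ Continuous (H n x)} with hTdef
  have hTmeas : ∀ n, MeasurableSet (T n) := fun n => measurableSet_toMeasurable μ _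
  have hTnull : ∀ n, μ (T n) = 0 := by
    intro n
    rw [hTdef, measure_toMeasurable]
    simpa [ae_iff] using hHcont n
  set H' : ℕ → X → ℝ → ℝ := fun n x ξ => if x ∈ T n then 0 else H n x ξ with hH'def
  have hH'meas : ∀ n ξ, Measurable fun x => H' n x ξ := fun n ξ =>
    Measurable.ite (hTmeas n) measurable_const (hHmeas n ξ)
  have hH'cont : ∀ n x, Continuous (H' n x) := by
    intro n x
    by_cases hx : x ∈ T n
    · simpa [hH'def, hx] using continuous_const
    · have hxg : Continuous (H n x) := by
        by_contra hcon
        exact hx (subset_toMeasurable μ _ hcon)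
      simpa [hH'def, hx] using hxg
  have hTae : ∀ᵐ x ∂μ, ∀ n, x ∉ T n := by
    rw [ae_all_iff]
    intro n
    have := hTnull n
    rwa [← compl_mem_ae_iff] at this
  have hH'ae : ∀ᵐ x ∂μ, ∀ n ξ, H' n x ξ = H n x ξ := by
    filter_upwards [hTae] with x hx n ξ
    simp [hH'def, hx n]
  -- measurable representatives
  obtain ⟨Φ', hΦ'meas, hΦ'ae⟩ : ∃ Φ' : ℕ → X → ℝ,
      (∀ n, Measurable (Φ' n)) ∧ ∀ n, Φseq n =ᵐ[μ] Φ' n :=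
    ⟨fun n => (hΦmem n).1.mk _, fun n => (hΦmem n).1.stronglyMeasurable_mk.measurable,
      fun n => (hΦmem n).1.ae_eq_mk⟩
  obtain ⟨Ψ', hΨ'meas, hΨ'ae⟩ : ∃ Ψ' : ℕ → X → ℝ,
      (∀ n, Measurable (Ψ' n)) ∧ ∀ n, Ψ n =ᵐ[μ] Ψ' n :=
    ⟨fun n => (hΨmem n).1.mk _, fun n => (hΨmem n).1.stronglyMeasurable_mk.measurable,
      fun n => (hΨmem n).1.ae_eq_mk⟩
  obtain ⟨Φ₀, hΦ₀meas, hΦ₀ae⟩ : ∃ Φ₀ : X → ℝ, Measurable Φ₀ ∧ Φ =ᵐ[μ] Φ₀ :=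
    ⟨hΦ.1.mk _, hΦ.1.stronglyMeasurable_mk.measurable, hΦ.1.ae_eq_mk⟩
  have hΦ₀mem : MemLp Φ₀ P μ := hΦ.ae_eq hΦ₀ae
  have hΦ'C : ∀ n, eLpNorm (Φ' n) P μ ≤ C := by
    intro n
    rw [← eLpNorm_congr_ae (hΦ'ae n)]
    exact hC n
  -- bound for the Ψ norms
  obtain ⟨N₀, hN₀⟩ := ENNReal.tendsto_atTop_zero.mp hΨ 1 zero_lt_one
  set D : ℝ≥0∞ := (Finset.range (N₀+1)).sup (fun n => eLpNorm (Ψ n) P μ) ⊔ 1 with hDdef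
  have hDtop : D ≠ ⊤ := by
    rw [hDdef]
    refine (lt_top_iff_ne_top.mp ?_)
    refine sup_lt_iff.2 ⟨?_, ENNReal.one_lt_top⟩
    refine Finset.sup_lt_iff (by simp) |>.2 fun n _ => (hΨmem n).2
  have hD : ∀ n, eLpNorm (Ψ n) P μ ≤ D := by
    intro n
    rcases le_or_gt n N₀ with h | h
    · exact le_sup_of_le_left (Finset.le_sup (f := fun n => eLpNorm (Ψ n) P μ) (Finset.mem_range.2 (Nat.lt_succ_of_le h)))
    · exact le_sup_of_le_right (hN₀ n h.le)
  have hΨ'D : ∀ n, eLpNorm (Ψ' n) P μ ≤ D := by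
    intro n
    rw [← eLpNorm_congr_ae (hΨ'ae n)]
    exact hD n
  -- growth for H'
  have hgrow' : ∀ᵐ x ∂μ, ∀ n ξ, |H' n x ξ| ≤ a * |ξ| ^ (p - 1) + b x := by
    filter_upwards [ae_all_iff.2 hgrowth] with x hx n ξ
    by_cases hxT : x ∈ T n
    · simp only [hH'def, if_pos hxT, abs_zero]
      have h1 : 0 ≤ a * |ξ| ^ (p - 1) := mul_nonneg ha (Real.rpow_nonneg (abs_nonneg ξ) _)
      linarith [hb0 x]
    · simpa [hH'def, hxT] using hx n ξ
  -- equicontinuity for H'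
  have hequi' : ∀ᵐ x ∂μ, ∀ M : ℝ, 0 ≤ M → ∀ ξ₁ ξ₂ : ℕ → ℝ,
      (∀ n, |ξ₁ n| ≤ M) → (∀ n, |ξ₂ n| ≤ M) →
      Tendsto (fun n => ξ₁ n - ξ₂ n) atTop (𝓝 0) →
      Tendsto (fun n => H' n x (ξ₁ n) - H' n x (ξ₂ n)) atTop (𝓝 0) := by
    filter_upwards [hequi, hTae] with x hx hxT M hM ξ₁ ξ₂ h₁ h₂ hdiff
    exact (hx M hM ξ₁ ξ₂ h₁ h₂ hdiff).congr fun n => by simp [hH'def, hxT n]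
  -- the main sequence of functions
  set F : ℕ → X → ℝ := fun n x =>
    (H' n x (Φ' n x + Ψ' n x) - H' n x (Φ' n x)) * Φ₀ x with hFdef
  have hFmeas : ∀ n, Measurable (F n) := fun n =>
    (((cara_meas (hH'meas n) (hH'cont n) ((hΦ'meas n).add (hΨ'meas n))).sub
      (cara_meas (hH'meas n) (hH'cont n) (hΦ'meas n))).mul hΦ₀meas)
  -- reduce the goal to F
  suffices hFtend : Tendsto (fun n => ∫ x, F n x ∂μ) atTop (𝓝 0) by
    refine hFtend.congr fun n => ?_
    refine integral_congr_ae ?_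
    filter_upwards [hH'ae, hΦ'ae n, hΨ'ae n, hΦ₀ae] with x h1 h2 h3 h4
    rw [hFdef]
    simp only
    rw [h1 n, h1 n, ← h2, ← h3, ← h4]
  -- the dominating functions
  set G : ℕ → X → ℝ := fun n x =>
    a * |Φ' n x + Ψ' n x| ^ (p - 1) + (a * |Φ' n x| ^ (p - 1) + 2 * b x) with hGdef
  have hGaesm : ∀ n, AEStronglyMeasurable (G n) μ := by
    intro n
    have hr : (0:ℝ) ≤ p - 1 := by linarith
    have m1 : Measurable fun x => a * |Φ' n x + Ψ' n x| ^ (p - 1) :=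
      ((Real.continuous_rpow_const hr).measurable.comp
        ((hΦ'meas n).add (hΨ'meas n)).abs).const_mul a
    have m2 : Measurable fun x => a * |Φ' n x| ^ (p - 1) :=
      ((Real.continuous_rpow_const hr).measurable.comp (hΦ'meas n).abs).const_mul a
    exact m1.aestronglyMeasurable.add (m2.aestronglyMeasurable.add (hb.1.const_mul 2))
  -- key estimate for powers
  have key_rpow : ∀ (g : X → ℝ) (B : ℝ≥0∞), eLpNorm g P μ ≤ B →
      eLpNorm (fun x => a * |g x| ^ (p - 1)) Q μ ≤ ENNReal.ofReal a * B ^ (p - 1) := by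
    intro g B hgB
    have h1 : (fun x => a * |g x| ^ (p - 1)) = a • (fun x => ‖g x‖ ^ (p - 1)) := by
      funext x
      simp [Real.norm_eq_abs, smul_eq_mul]
    rw [h1, eLpNorm_const_smul, eLpNorm_norm_rpow g (by linarith : (0:ℝ) < p - 1), hQmul,
      Real.enorm_eq_ofReal ha]
    exact mul_le_mul_right (ENNReal.rpow_le_rpow hgB (by linarith)) _
  have hCD : ∀ n, eLpNorm (fun x => Φ' n x + Ψ' n x) P μ ≤ C + D := by
    intro n
    refine (eLpNorm_add_le (hΦ'meas n).aestronglyMeasurable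
      (hΨ'meas n).aestronglyMeasurable hP1).trans ?_
    exact add_le_add (hΦ'C n) (hΨ'D n)
  set K : ℝ≥0∞ := ENNReal.ofReal a * (C + D) ^ (p - 1) +
      (ENNReal.ofReal a * C ^ (p - 1) + 2 * eLpNorm b Q μ) with hKdef
  have hKtop : K ≠ ⊤ := by
    rw [hKdef]
    have h1 : (C + D) ^ (p - 1) ≠ ⊤ :=
      ENNReal.rpow_ne_top_of_nonneg (by linarith) (ENNReal.add_ne_top.2 ⟨hCtop, hDtop⟩)
    have h2 : C ^ (p - 1) ≠ ⊤ := ENNReal.rpow_ne_top_of_nonneg (by linarith) hCtop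
    have h3 : eLpNorm b Q μ ≠ ⊤ := hb.2.ne
    exact ENNReal.add_ne_top.2 ⟨ENNReal.mul_ne_top ENNReal.ofReal_ne_top h1,
      ENNReal.add_ne_top.2 ⟨ENNReal.mul_ne_top ENNReal.ofReal_ne_top h2,
        ENNReal.mul_ne_top (by simp) h3⟩⟩
  have hGK : ∀ n, eLpNorm (G n) Q μ ≤ K := by
    intro n
    have hr : (0:ℝ) ≤ p - 1 := by linarith
    have m1 : Measurable fun x => a * |Φ' n x + Ψ' n x| ^ (p - 1) :=
      ((Real.continuous_rpow_const hr).measurable.comp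
        ((hΦ'meas n).add (hΨ'meas n)).abs).const_mul a
    have m2 : Measurable fun x => a * |Φ' n x| ^ (p - 1) :=
      ((Real.continuous_rpow_const hr).measurable.comp (hΦ'meas n).abs).const_mul a
    have h2b : eLpNorm (fun x => 2 * b x) Q μ ≤ 2 * eLpNorm b Q μ := by
      have : (fun x => 2 * b x) = (2:ℝ) • b := by funext x; simp [smul_eq_mul]
      rw [this, eLpNorm_const_smul]
      exact le_of_eq (by rw [← ofReal_norm]; norm_num)
    refine (eLpNorm_add_le m1.aestronglyMeasurable
      (m2.aestronglyMeasurable.add (hb.1.const_mul 2)) hQ1).trans ?_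
    refine add_le_add (key_rpow _ _ (hCD n)) ?_
    refine (eLpNorm_add_le m2.aestronglyMeasurable (hb.1.const_mul 2) hQ1).trans ?_
    exact add_le_add (key_rpow _ _ (hΦ'C n)) h2b
  -- pointwise bound |F| ≤ G * |Φ₀|
  have hFle : ∀ n, ∀ᵐ x ∂μ, |F n x| ≤ G n x * |Φ₀ x| := by
    intro n
    filter_upwards [hgrow'] with x hx
    rw [hFdef, hGdef]
    simp only
    rw [abs_mul]
    refine mul_le_mul_of_nonneg_right ?_ (abs_nonneg _)
    calc |H' n x (Φ' n x + Ψ' n x) - H' n x (Φ' n x)|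
        ≤ |H' n x (Φ' n x + Ψ' n x)| + |H' n x (Φ' n x)| := abs_sub _ _
      _ ≤ (a * |Φ' n x + Ψ' n x| ^ (p - 1) + b x) + (a * |Φ' n x| ^ (p - 1) + b x) :=
          add_le_add (hx n _) (hx n _)
      _ = a * |Φ' n x + Ψ' n x| ^ (p - 1) + (a * |Φ' n x| ^ (p - 1) + 2 * b x) := by ring
  -- Hölder core estimate
  have hcore : ∀ n (s : Set X), MeasurableSet s →
      eLpNorm (s.indicator (F n)) 1 μ ≤ K * eLpNorm (s.indicator Φ₀) P μ := by
    intro n s hs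
    have h1 : eLpNorm (s.indicator (F n)) 1 μ ≤
        eLpNorm (fun x => G n x * s.indicator Φ₀ x) 1 μ := by
      refine eLpNorm_mono_ae ?_
      filter_upwards [hFle n] with x hx
      by_cases hxs : x ∈ s
      · simp only [Set.indicator_of_mem hxs, Real.norm_eq_abs, abs_mul]
        exact hx.trans (mul_le_mul_of_nonneg_right (le_abs_self _) (abs_nonneg _))
      · simp [Set.indicator_of_notMem hxs]
    refine h1.trans ?_
    have h2 := eLpNorm_le_eLpNorm_mul_eLpNorm'_of_norm (p := Q) (q := P) (r := 1) (hGaesm n)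
      ((hΦ₀meas.aestronglyMeasurable).indicator hs) (· * ·) 1
      (Filter.Eventually.of_forall fun x => by rw [NNReal.coe_one, one_mul]; exact le_of_eq (norm_mul _ _))
      (hpqr := ⟨by simpa [one_div] using hQP.symm⟩)
    rw [ENNReal.coe_one, one_mul] at h2
    exact h2.trans (mul_le_mul_left (hGK n) _)
  have hFfin : ∀ n, eLpNorm (F n) 1 μ ≠ ⊤ := by
    intro n
    have h := hcore n Set.univ MeasurableSet.univ
    rw [Set.indicator_univ, Set.indicator_univ] at h
    exact (h.trans_lt (ENNReal.mul_lt_top hKtop.lt_top hΦ₀mem.2)).ne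
  -- subsequence argument
  refine tendsto_of_subseq_tendsto fun ns hns => ?_
  have hΨIM : TendstoInMeasure μ (fun n => Ψ' (ns n)) atTop (0 : X → ℝ) := by
    refine tendstoInMeasure_of_tendsto_eLpNorm (p := P) hP0
      (fun n => (hΨ'meas _).aestronglyMeasurable) aestronglyMeasurable_const ?_
    have : ∀ n : ℕ, eLpNorm (Ψ' (ns n) - (0 : X → ℝ)) P μ = eLpNorm (Ψ (ns n)) P μ := by
      intro n
      rw [sub_zero]
      exact (eLpNorm_congr_ae (hΨ'ae (ns n))).symm
    exact (hΨ.comp hns).congr fun n => (this n).symm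
  obtain ⟨ms, hms, hms_ae⟩ := hΨIM.exists_seq_tendsto_ae
  obtain ⟨φ, hφ, hvmono⟩ :=
    strictMono_subseq_of_tendsto_atTop (hns.comp hms.tendsto_atTop)
  set v : ℕ → ℕ := fun k => ns (ms (φ k)) with hvdef
  have hvS : StrictMono v := hvmono
  refine ⟨ms ∘ φ, ?_⟩
  show Tendsto (fun k => ∫ x, F (v k) x ∂μ) atTop (𝓝 0)
  have hΨae_v : ∀ᵐ x ∂μ, Tendsto (fun k => Ψ' (v k) x) atTop (𝓝 0) := by
    filter_upwards [hms_ae] with x hx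
    have := hx.comp hφ.tendsto_atTop
    exact this
  have hΨv_eLp : Tendsto (fun k => eLpNorm (Ψ' (v k)) P μ) atTop (𝓝 0) :=
    (hΨ.comp (hvS.tendsto_atTop)).congr fun k => eLpNorm_congr_ae (hΨ'ae (v k))
  have hΨvIM : TendstoInMeasure μ (fun k => Ψ' (v k)) atTop (0 : X → ℝ) := by
    refine tendstoInMeasure_of_tendsto_eLpNorm (p := P) hP0
      (fun k => (hΨ'meas _).aestronglyMeasurable) aestronglyMeasurable_const ?_
    refine hΨv_eLp.congr fun k => ?_
    rw [sub_zero]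
  -- it suffices to prove L¹ convergence
  suffices hL1 : Tendsto (fun k => eLpNorm (F (v k)) 1 μ) atTop (𝓝 0) by
    have htoReal : Tendsto (fun k => (eLpNorm (F (v k)) 1 μ).toReal) atTop (𝓝 0) := by
      have := (ENNReal.tendsto_toReal (by simp)).comp hL1
      simpa [Function.comp_def] using this
    refine squeeze_zero_norm (fun k => ?_) htoReal
    have h1 : ‖∫ x, F (v k) x ∂μ‖ ≤ (∫⁻ x, ENNReal.ofReal ‖F (v k) x‖ ∂μ).toReal :=
      norm_integral_le_lintegral_norm _
    refine h1.trans (le_of_eq ?_)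
    rw [eLpNorm_one_eq_lintegral_enorm]
    congr 1
    refine lintegral_congr fun x => ?_
    rw [ofReal_norm]
  -- uniform integrability
  have hUI : UnifIntegrable (fun k => F (v k)) 1 μ := by
    intro ε hε
    have hKpos : (0:ℝ) < K.toReal + 1 := by positivity
    have hε' : (0:ℝ) < ε / (K.toReal + 1) := div_pos hε hKpos
    obtain ⟨δ, hδpos, hδ⟩ := hΦ₀mem.eLpNorm_indicator_le hP1 hPtop hε'
    refine ⟨δ, hδpos, fun k s hs hμs => ?_⟩
    refine (hcore (v k) s hs).trans ?_
    calc K * eLpNorm (s.indicator Φ₀) P μ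
        ≤ K * ENNReal.ofReal (ε / (K.toReal + 1)) := mul_le_mul_right (hδ s hs hμs) _
      _ ≤ ENNReal.ofReal K.toReal * ENNReal.ofReal (ε / (K.toReal + 1)) :=
          mul_le_mul_left (le_of_eq (ENNReal.ofReal_toReal hKtop).symm) _
      _ = ENNReal.ofReal (K.toReal * (ε / (K.toReal + 1))) :=
          (ENNReal.ofReal_mul ENNReal.toReal_nonneg).symm
      _ ≤ ENNReal.ofReal ε := by
          refine ENNReal.ofReal_le_ofReal ?_
          rw [mul_div_assoc']
          rw [div_le_iff₀ hKpos]
          nlinarith [ENNReal.toReal_nonneg (a := K)]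
  -- convergence in measure
  have hFIM : TendstoInMeasure μ (fun k => F (v k)) atTop (0 : X → ℝ) := by
    rw [tendstoInMeasure_iff_dist]
    intro ε hε
    simp only [Pi.zero_apply, dist_zero_right, Real.norm_eq_abs]
    rw [ENNReal.tendsto_atTop_zero]
    intro η hη
    have hη3 : (0:ℝ≥0∞) < η / 3 := ENNReal.div_pos hη.ne' (by norm_num)
    -- choose the truncation level M
    obtain ⟨M, hM1, hMbd⟩ : ∃ M : ℝ, 1 ≤ M ∧ ∀ n, μ {x | M ≤ |Φ' n x|} ≤ η / 3 := by
      have htend : Tendsto (fun j : ℕ => ((ENNReal.ofReal (j:ℝ))⁻¹) ^ p * C ^ p)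
          atTop (𝓝 0) := by
        have h1 : Tendsto (fun j : ℕ => (ENNReal.ofReal (j:ℝ))⁻¹) atTop (𝓝 (⊤ : ℝ≥0∞)⁻¹) :=
          ENNReal.tendsto_inv_iff.2
            (ENNReal.tendsto_ofReal_atTop.comp tendsto_natCast_atTop_atTop)
        have h2 : Tendsto (fun j : ℕ => ((ENNReal.ofReal (j:ℝ))⁻¹) ^ p) atTop (𝓝 0) := by
          have := (ENNReal.continuous_rpow_const (y := p)).tendsto ((⊤ : ℝ≥0∞)⁻¹)
          have h3 := this.comp h1
          simpa [ENNReal.zero_rpow_of_pos hp0, Function.comp_def] using h3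
        have h4 := ENNReal.Tendsto.mul_const h2
          (Or.inr (ENNReal.rpow_ne_top_of_nonneg hp0.le hCtop))
        simpa using h4
      have hev : ∀ᶠ j : ℕ in atTop, ((ENNReal.ofReal (j:ℝ))⁻¹) ^ p * C ^ p ≤ η / 3 := by
        refine htend.eventually_le_const ?_
        · exact hη3
      obtain ⟨j, hj1, hjle⟩ := (hev.and (eventually_ge_atTop 1)).exists
      refine ⟨(j:ℝ), by exact_mod_cast hjle, fun n => ?_⟩
      have hjpos : (0:ℝ) < (j:ℝ) := by exact_mod_cast hjle
      have hch := meas_ge_le_mul_pow_eLpNorm_enorm μ hP0 hPtop (hΦ'meas n).aestronglyMeasurable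
        (ε := ENNReal.ofReal (j:ℝ)) (ENNReal.ofReal_pos.2 hjpos).ne' (by simp)
      have hsub : {x | (j:ℝ) ≤ |Φ' n x|} ⊆ {x | ENNReal.ofReal (j:ℝ) ≤ ‖Φ' n x‖ₑ} := by
        intro x hx
        simp only [Set.mem_setOf_eq] at hx ⊢
        rw [← ofReal_norm, Real.norm_eq_abs]
        exact ENNReal.ofReal_le_ofReal hx
      refine le_trans (measure_mono hsub) (hch.trans ?_)
      rw [hPreal]
      refine le_trans ?_ hj1
      exact mul_le_mul_right (ENNReal.rpow_le_rpow (hΦ'C n) hp0.le) _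
    have hM0 : (0:ℝ) < M := lt_of_lt_of_le zero_lt_one hM1
    -- the good sets
    set B : ℕ → Set X := fun k => {x | |Φ' (v k) x| ≤ M ∧ |Ψ' (v k) x| ≤ 1} with hBdef
    have hBmeas : ∀ k, MeasurableSet (B k) := by
      intro k
      refine MeasurableSet.inter ?_ ?_
      · exact measurableSet_le (hΦ'meas _).abs measurable_const
      · exact measurableSet_le (hΨ'meas _).abs measurable_const
    set e : ℕ → X → ℝ := fun k => (B k).indicator (F (v k)) with hedef
    have hemeas : ∀ k, AEStronglyMeasurable (e k) μ := fun k =>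
      ((hFmeas (v k)).indicator (hBmeas k)).aestronglyMeasurable
    -- pointwise convergence of e
    have hek : ∀ᵐ x ∂μ, Tendsto (fun k => e k x) atTop (𝓝 0) := by
      filter_upwards [hequi', hΨae_v] with x hx hΨx
      set ξ₂ : ℕ → ℝ := fun n => clipR M (Φ' n x) with hξ₂
      set ξ₁ : ℕ → ℝ := fun n =>
        ξ₂ n + (if n ∈ Set.range v then clipR 1 (Ψ' n x) else 0) with hξ₁
      have hb₂ : ∀ n, |ξ₂ n| ≤ M + 1 := fun n =>
        (clipR_abs_le hM0.le _).trans (by linarith)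
      have hb₁ : ∀ n, |ξ₁ n| ≤ M + 1 := by
        intro n
        rw [hξ₁]
        refine (abs_add_le _ _).trans ?_
        have h1 : |ξ₂ n| ≤ M := clipR_abs_le hM0.le _
        have h2 : |if n ∈ Set.range v then clipR 1 (Ψ' n x) else 0| ≤ 1 := by
          split
          · exact clipR_abs_le zero_le_one _
          · simp
        linarith
      have hdiff : Tendsto (fun n => ξ₁ n - ξ₂ n) atTop (𝓝 0) := by
        have hsimp : ∀ n, ξ₁ n - ξ₂ n = if n ∈ Set.range v then clipR 1 (Ψ' n x) else 0 := by
          intro n; rw [hξ₁]; ring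
        rw [Metric.tendsto_atTop]
        intro δ hδ
        rw [Metric.tendsto_atTop] at hΨx
        obtain ⟨K₀, hK₀⟩ := hΨx δ hδ
        refine ⟨v K₀, fun n hn => ?_⟩
        rw [hsimp n, Real.dist_eq, sub_zero]
        by_cases hr : n ∈ Set.range v
        · obtain ⟨k, rfl⟩ := hr
          have hk : K₀ ≤ k := by
            by_contra hcon
            push_neg at hcon
            exact absurd hn (not_le.2 (hvS hcon))
          rw [if_pos (Set.mem_range_self k)]
          have := hK₀ k hk
          rw [Real.dist_eq, sub_zero] at this
          exact lt_of_le_of_lt (clipR_abs_le_abs zero_le_one _) this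
        · rw [if_neg hr]
          simpa using hδ
      have hHd := hx (M + 1) (by linarith) ξ₁ ξ₂ hb₁ hb₂ hdiff
      have hHdv := hHd.comp hvS.tendsto_atTop
      refine squeeze_zero_norm (a := fun k =>
        |H' (v k) x (ξ₁ (v k)) - H' (v k) x (ξ₂ (v k))| * |Φ₀ x|) (fun k => ?_) ?_
      · by_cases hxB : x ∈ B k
        · rw [hedef]
          simp only [Set.indicator_of_mem hxB]
          have hx1 : ξ₂ (v k) = Φ' (v k) x := clipR_eq_self hxB.1
          have hx2 : ξ₁ (v k) = Φ' (v k) x + Ψ' (v k) x := by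
            simp only [hξ₁]
            rw [if_pos (Set.mem_range_self k), hx1, clipR_eq_self hxB.2]
          rw [hFdef]
          simp only
          rw [Real.norm_eq_abs, abs_mul, hx1, hx2]
        · rw [hedef]
          simp only [Set.indicator_of_notMem hxB, norm_zero]
          positivity
      · have h1 : Tendsto (fun k =>
            |H' (v k) x (ξ₁ (v k)) - H' (v k) x (ξ₂ (v k))|) atTop (𝓝 0) := by
          have := hHdv.abs
          simpa using this
        have := h1.mul_const |Φ₀ x|
        simpa using this
    have heIM : TendstoInMeasure μ e atTop (0 : X → ℝ) :=
      tendstoInMeasure_of_tendsto_ae hemeas (by simpa using hek)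
    have he3 : ∀ᶠ k in atTop, μ {x | ε ≤ |e k x|} ≤ η / 3 := by
      have := tendstoInMeasure_iff_dist.1 heIM ε hε
      simp only [Pi.zero_apply, dist_zero_right, Real.norm_eq_abs] at this
      exact this.eventually_le_const hη3
    have hΨ3 : ∀ᶠ k in atTop, μ {x | 1 ≤ |Ψ' (v k) x|} ≤ η / 3 := by
      have := tendstoInMeasure_iff_dist.1 hΨvIM 1 zero_lt_one
      simp only [Pi.zero_apply, dist_zero_right, Real.norm_eq_abs] at this
      exact this.eventually_le_const hη3
    obtain ⟨N, hN⟩ := eventually_atTop.1 (he3.and hΨ3)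
    refine ⟨N, fun k hk => ?_⟩
    obtain ⟨hNe, hNΨ⟩ := hN k hk
    have hincl : {x | ε ≤ |F (v k) x|} ⊆
        {x | ε ≤ |e k x|} ∪ ({x | M ≤ |Φ' (v k) x|} ∪ {x | 1 ≤ |Ψ' (v k) x|}) := by
      intro x hx
      simp only [Set.mem_setOf_eq] at hx
      by_cases h1 : M ≤ |Φ' (v k) x|
      · exact Or.inr (Or.inl h1)
      by_cases h2 : (1:ℝ) ≤ |Ψ' (v k) x|
      · exact Or.inr (Or.inr h2)
      push_neg at h1 h2
      left
      have hxB : x ∈ B k := ⟨h1.le, h2.le⟩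
      show ε ≤ |e k x|
      rw [hedef]
      simpa [Set.indicator_of_mem hxB] using hx
    calc μ {x | ε ≤ |F (v k) x|}
        ≤ μ ({x | ε ≤ |e k x|} ∪ ({x | M ≤ |Φ' (v k) x|} ∪ {x | 1 ≤ |Ψ' (v k) x|})) :=
          measure_mono hincl
      _ ≤ μ {x | ε ≤ |e k x|} + (μ {x | M ≤ |Φ' (v k) x|} + μ {x | 1 ≤ |Ψ' (v k) x|}) :=
          (measure_union_le _ _).trans (add_le_add le_rfl (measure_union_le _ _))
      _ ≤ η / 3 + (η / 3 + η / 3) := add_le_add hNe (add_le_add (hMbd (v k)) hNΨ)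
      _ = η := by rw [← add_assoc, ENNReal.add_thirds]
  -- conclude via Vitali's theorem
  have hL1' := tendsto_Lp_finite_of_tendstoInMeasure (μ := μ) (le_refl (1 : ℝ≥0∞))
    ENNReal.one_ne_top (fun k => (hFmeas (v k)).aestronglyMeasurable) MemLp.zero hUI hFIM
  refine hL1'.congr fun k => ?_
  rw [sub_zero]
end

section
/- Let h : Ω × S^{N−1} → [0,∞) be a Borel function on an open set Ω ⊆ ℝ^N, and let K be the class of rectifiable sets H ⊆ Ω such that h(x, ν_H(x)) = 0 for H^{N−1}-a.e. x ∈ H. Suppose sup{H^{N−1}(H) : H ∈ K} = L̃ < ∞. Then there exists K ∈ K with H^{N−1}(K) = L̃, and every H ∈ K satisfies H ⊆ K up to an H^{N−1}-null set. -/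
open MeasureTheory

/-- Existence of a maximal element of the class `𝒦` of "rectifiable" sets on which the
density `h(·, ν_H(·))` vanishes a.e.: if the supremum `L̃` of measures of members of `𝒦` is
finite, there is `K ∈ 𝒦` with `μ(K) = L̃` containing every member of `𝒦` up to a null set.
Here `μ` plays the role of `H^{N−1}`, `R` the class of rectifiable subsets of `Ω` (containing
`∅`, closed under countable unions), and `ν H x` the approximate normal of `H` at `x`,
compatible between nested rectifiable sets. -/
theorem stmt_11 {X D : Type*} [MeasurableSpace X] (μ : Measure X)
    (ν : Set X → X → D) (h : X → D → ℝ) (hpos : ∀ x d, 0 ≤ h x d)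
    (R : Set (Set X)) (hRmeas : ∀ H ∈ R, MeasurableSet H) (hRempty : ∅ ∈ R)
    (hRunion : ∀ H : ℕ → Set X, (∀ n, H n ∈ R) → (⋃ n, H n) ∈ R)
    (hν : ∀ H ∈ R, ∀ H' ∈ R, H ⊆ H' → μ {x ∈ H | ν H' x ≠ ν H x} = 0)
    (𝒦 : Set (Set X))
    (h𝒦 : 𝒦 = {H | H ∈ R ∧ μ {x ∈ H | h x (ν H x) ≠ 0} = 0})
    (L : ENNReal) (hL : L ≠ ⊤) (hsup : (⨆ H ∈ 𝒦, μ H) = L) :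
    ∃ K ∈ 𝒦, μ K = L ∧ ∀ H ∈ 𝒦, μ (H \ K) = 0 := by
  -- countable unions stay in 𝒦
  have union𝒦 : ∀ f : ℕ → Set X, (∀ n, f n ∈ 𝒦) → (⋃ n, f n) ∈ 𝒦 := by
    intro f hf
    have hfR : ∀ n, f n ∈ R := fun n => ((h𝒦 ▸ hf n) : _).1
    have hUR : (⋃ n, f n) ∈ R := hRunion f hfR
    rw [h𝒦]
    refine ⟨hUR, ?_⟩
    have hsub : {x ∈ ⋃ n, f n | h x (ν (⋃ n, f n) x) ≠ 0} ⊆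
        ⋃ n, ({x ∈ f n | ν (⋃ n, f n) x ≠ ν (f n) x} ∪
              {x ∈ f n | h x (ν (f n) x) ≠ 0}) := by
      rintro x ⟨hx, hne⟩
      obtain ⟨n, hn⟩ := Set.mem_iUnion.mp hx
      refine Set.mem_iUnion.mpr ⟨n, ?_⟩
      by_cases hd : ν (⋃ n, f n) x = ν (f n) x
      · exact Or.inr ⟨hn, by rwa [hd] at hne⟩
      · exact Or.inl ⟨hn, hd⟩
    refine measure_mono_null hsub (measure_iUnion_null fun n => ?_)
    refine measure_union_null ?_ ((h𝒦 ▸ hf n) : _).2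
    exact hν (f n) (hfR n) _ hUR (Set.subset_iUnion f n)
  -- ∅ ∈ 𝒦
  have hempty𝒦 : (∅ : Set X) ∈ 𝒦 := by
    rw [h𝒦]; exact ⟨hRempty, by simp⟩
  -- choose a maximizing sequence
  have hsSup : sSup (μ '' 𝒦) = L := by
    rw [sSup_image]; exact hsup
  obtain ⟨u, hu_mono, hu_tendsto, hu_mem⟩ :=
    exists_seq_tendsto_sSup (S := μ '' 𝒦) ⟨μ ∅, ⟨∅, hempty𝒦, rfl⟩⟩ (OrderTop.bddAbove _)
  choose f hf𝒦 hfμ using hu_mem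
  set K : Set X := ⋃ n, f n with hK
  have hK𝒦 : K ∈ 𝒦 := union𝒦 f hf𝒦
  -- any member of 𝒦 has measure ≤ L
  have hle : ∀ H ∈ 𝒦, μ H ≤ L := by
    intro H hH
    rw [← hsup]
    exact le_iSup₂ (f := fun H _ => μ H) H hH
  have hKL : μ K = L := by
    refine le_antisymm (hle K hK𝒦) ?_
    rw [← hsSup]
    refine le_of_tendsto hu_tendsto (Filter.Eventually.of_forall fun n => ?_)
    rw [← hfμ n]
    exact measure_mono (Set.subset_iUnion f n)
  refine ⟨K, hK𝒦, hKL, ?_⟩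
  intro H hH
  -- K ∪ H ∈ 𝒦, with the same measure L
  set g : ℕ → Set X := fun n => Nat.rec H (fun n _ => f n) n with hg
  have hg𝒦 : ∀ n, g n ∈ 𝒦 := by
    intro n; cases n with
    | zero => exact hH
    | succ m => exact hf𝒦 m
  have hU : (⋃ n, g n) = H ∪ K := by
    apply Set.eq_of_subset_of_subset
    · refine Set.iUnion_subset fun n => ?_
      cases n with
      | zero => exact Set.subset_union_left
      | succ m => exact Set.subset_union_of_subset_right (Set.subset_iUnion f m) _
    · refine Set.union_subset ?_ ?_
      · exact Set.subset_iUnion g 0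
      · exact Set.iUnion_subset fun m => Set.subset_iUnion_of_subset (m + 1) le_rfl
  have hUK : (H ∪ K) ∈ 𝒦 := hU ▸ union𝒦 g hg𝒦
  have hUL : μ (H ∪ K) = L :=
    le_antisymm (hle _ hUK) (hKL ▸ measure_mono Set.subset_union_right)
  have hKmeas : MeasurableSet K := hRmeas K ((h𝒦 ▸ hK𝒦) : _).1
  have hdiff : μ (H \ K) + μ K = μ (H ∪ K) := by
    rw [← measure_union (Set.disjoint_sdiff_left) hKmeas, Set.diff_union_self]
  have : μ (H \ K) + L = L := by rw [← hKL, hdiff, hUL, hKL]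
  calc μ (H \ K) = μ (H \ K) + L - L := (ENNReal.add_sub_cancel_right hL).symm
    _ = L - L := by rw [this]
    _ = 0 := tsub_self L
end
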